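/- Let M → X and N → Y be upper semicontinuous Banach bundles, ω : X → Y continuous, and Ω : M → N a map covering ω that is fibrewise linear and satisfies ‖Ω(m)‖ ≤ K‖m‖ for some constant K > 0. Suppose there is a collection Γ of continuous sections of M whose values densely span each fibre, such that for each γ ∈ Γ the section x ↦ (x, Ω(γ(x))) of the pull-back bundle ω*(N) is continuous. Then Ω is continuous. Moreover if Ω is continuous, fibrewise linear, bounded below (‖Ω(m)‖ ≥ k‖m‖ with k > 0) and ω is an embedding, then Ω⁻¹ : Ω(M) → M is continuous. -/
import Mathlib

set_option linter.unusedSectionVars false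


/- Statement 19: A fibrewise-linear bounded bundle map Ω covering a continuous map ω, which
is continuous against a dense family of sections (into the pull-back bundle), is continuous;
and if Ω is continuous, fibrewise linear, bounded below, and ω is an embedding, then
Ω⁻¹ : Ω(M) → M is continuous (i.e. Ω is an embedding). -/

open Filter Topology

variable {X Y : Type*} [TopologicalSpace X] [TopologicalSpace Y]
  {E : X → Type*} [∀ x, NormedAddCommGroup (E x)] [∀ x, NormedSpace ℂ (E x)]
  [∀ x, CompleteSpace (E x)] [TopologicalSpace (Σ x, E x)]
  {F : Y → Type*} [∀ y, NormedAddCommGroup (F y)] [∀ y, NormedSpace ℂ (F y)]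
  [∀ y, CompleteSpace (F y)] [TopologicalSpace (Σ y, F y)]

/-- An upper semicontinuous Banach bundle. -/
structure IsUSCBanachBundle {X : Type*} [TopologicalSpace X] (E : X → Type*)
    [∀ x, NormedAddCommGroup (E x)] [∀ x, NormedSpace ℂ (E x)] [∀ x, CompleteSpace (E x)]
    [TopologicalSpace (Σ x, E x)] : Prop where
  cont_proj : Continuous (Sigma.fst : (Σ x, E x) → X)
  open_proj : IsOpenMap (Sigma.fst : (Σ x, E x) → X)
  usc_norm : UpperSemicontinuous (fun m : Σ x, E x => ‖m.2‖)
  cont_add : Continuous (fun p : {q : (Σ x, E x) × (Σ x, E x) // q.1.1 = q.2.1} =>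
    (⟨p.1.1.1, p.1.1.2 + cast (congrArg E p.2).symm p.1.2.2⟩ : Σ x, E x))
  cont_smul : Continuous (fun p : ℂ × (Σ x, E x) => (⟨p.2.1, p.1 • p.2.2⟩ : Σ x, E x))
  zero_criterion : ∀ (G : Filter (Σ x, E x)) (x : X),
    Tendsto (fun m : Σ x, E x => ‖m.2‖) G (𝓝 0) → Tendsto Sigma.fst G (𝓝 x) →
      G ≤ 𝓝 (⟨x, 0⟩ : Σ x, E x)

section AuxBundle

variable {W : Type*} [TopologicalSpace W] {B : W → Type*}
  [∀ w, NormedAddCommGroup (B w)] [∀ w, NormedSpace ℂ (B w)]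
  [∀ w, CompleteSpace (B w)] [TopologicalSpace (Σ w, B w)]

/-- Neighbourhoods of zero elements contain "tube" sets. -/
theorem aux_zero_mem (hB : IsUSCBanachBundle B) {w₀ : W}
    {S : Set (Σ w, B w)} (hS : S ∈ 𝓝 (⟨w₀, 0⟩ : Σ w, B w)) :
    ∃ O : Set W, IsOpen O ∧ w₀ ∈ O ∧ ∃ ε > (0:ℝ),
      ∀ n : Σ w, B w, n.1 ∈ O → ‖n.2‖ < ε → n ∈ S := by
  have hG : (comap Sigma.fst (𝓝 w₀) ⊓ comap (fun n : Σ w, B w => ‖n.2‖) (𝓝 0))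
      ≤ 𝓝 (⟨w₀, 0⟩ : Σ w, B w) :=
    hB.zero_criterion _ w₀ (tendsto_iff_comap.mpr inf_le_right)
      (tendsto_iff_comap.mpr inf_le_left)
  have hmem := hG hS
  rw [Filter.mem_inf_iff] at hmem
  obtain ⟨A, hA, Bs, hBs, hSe⟩ := hmem
  rw [Filter.mem_comap] at hA hBs
  obtain ⟨SA, hSA, hA'⟩ := hA
  obtain ⟨T, hT, hB'⟩ := hBs
  obtain ⟨O, hOsub, hOopen, hO⟩ := mem_nhds_iff.mp hSA
  obtain ⟨ε, hε, hball⟩ := Metric.mem_nhds_iff.mp hT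
  refine ⟨O, hOopen, hO, ε, hε, fun n h1 h2 => ?_⟩
  have hn1 : n ∈ A := hA' (hOsub h1)
  have hn2 : n ∈ Bs := hB' (hball (by
    simp only [Metric.mem_ball, Real.dist_eq, sub_zero]
    rwa [abs_of_nonneg (norm_nonneg _)]))
  rw [hSe]
  exact ⟨hn1, hn2⟩

/-- Key lemma: neighbourhoods are stable under small perturbations near a point. -/
theorem aux_key (hB : IsUSCBanachBundle B) (n₀ : Σ w, B w)
    {U : Set (Σ w, B w)} (hU : U ∈ 𝓝 n₀) :
    ∃ V : Set (Σ w, B w), IsOpen V ∧ n₀ ∈ V ∧ ∃ O : Set W, IsOpen O ∧ n₀.1 ∈ O ∧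
      ∃ ε > (0:ℝ), ∀ (w : W) (a b : B w), (⟨w, a⟩ : Σ w, B w) ∈ V → w ∈ O → ‖b‖ < ε →
        (⟨w, a + b⟩ : Σ w, B w) ∈ U := by
  set p₀ : {q : (Σ w, B w) × (Σ w, B w) // q.1.1 = q.2.1} :=
    ⟨(n₀, ⟨n₀.1, 0⟩), rfl⟩ with hp₀
  have h2 : (fun p : {q : (Σ w, B w) × (Σ w, B w) // q.1.1 = q.2.1} =>
      (⟨p.1.1.1, p.1.1.2 + cast (congrArg B p.2).symm p.1.2.2⟩ : Σ w, B w)) ⁻¹' U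
      ∈ 𝓝 p₀ := by
    refine (hB.cont_add.continuousAt (x := p₀)).preimage_mem_nhds ?_
    show U ∈ 𝓝 (⟨n₀.1, n₀.2 + cast (congrArg B (rfl : n₀.1 = n₀.1)).symm 0⟩ : Σ w, B w)
    rw [cast_eq, add_zero]
    exact hU
  rw [hp₀, nhds_subtype_eq_comap, Filter.mem_comap] at h2
  obtain ⟨Wpr, hWpr, hWsub⟩ := h2
  rw [mem_nhds_prod_iff] at hWpr
  obtain ⟨V₁, hV₁, V₂, hV₂, hprod⟩ := hWpr
  obtain ⟨O, hOopen, hOw, ε, hε, hO⟩ := aux_zero_mem hB hV₂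
  obtain ⟨V, hVsub, hVopen, hVmem⟩ := mem_nhds_iff.mp hV₁
  refine ⟨V, hVopen, hVmem, O, hOopen, hOw, ε, hε, fun w a b ha hw hb => ?_⟩
  have hq : (⟨(⟨w, a⟩, ⟨w, b⟩), rfl⟩ : {q : (Σ w, B w) × (Σ w, B w) // q.1.1 = q.2.1})
      ∈ Subtype.val ⁻¹' Wpr := hprod ⟨hVsub ha, hO ⟨w, b⟩ hw hb⟩
  have h3 := hWsub hq
  exact h3

/-- Thinness: points of the same fibre in a small neighbourhood of a point are close. -/
theorem aux_thin (hB : IsUSCBanachBundle B) (n₀ : Σ w, B w) {ε : ℝ} (hε : 0 < ε) :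
    ∃ N : Set (Σ w, B w), IsOpen N ∧ n₀ ∈ N ∧
      ∀ (w : W) (a b : B w), (⟨w, a⟩ : Σ w, B w) ∈ N → (⟨w, b⟩ : Σ w, B w) ∈ N →
        ‖a - b‖ < ε := by
  have c1 : Continuous fun p : {q : (Σ w, B w) × (Σ w, B w) // q.1.1 = q.2.1} =>
      (⟨p.1.2.1, (-1 : ℂ) • p.1.2.2⟩ : Σ w, B w) :=
    hB.cont_smul.comp (continuous_const.prodMk (continuous_snd.comp continuous_subtype_val))
  have c2 : Continuous fun p : {q : (Σ w, B w) × (Σ w, B w) // q.1.1 = q.2.1} =>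
      (⟨(p.1.1, (⟨p.1.2.1, (-1 : ℂ) • p.1.2.2⟩ : Σ w, B w)), p.2⟩ :
        {q : (Σ w, B w) × (Σ w, B w) // q.1.1 = q.2.1}) :=
    ((continuous_fst.comp continuous_subtype_val).prodMk c1).subtype_mk _
  have c3 : Continuous fun p : {q : (Σ w, B w) × (Σ w, B w) // q.1.1 = q.2.1} =>
      (⟨p.1.1.1, p.1.1.2 + cast (congrArg B p.2).symm ((-1 : ℂ) • p.1.2.2)⟩ : Σ w, B w) :=
    hB.cont_add.comp c2
  set p₀ : {q : (Σ w, B w) × (Σ w, B w) // q.1.1 = q.2.1} := ⟨(n₀, n₀), rfl⟩ with hp₀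
  have hval : ‖(⟨n₀.1, n₀.2 + cast (congrArg B (rfl : n₀.1 = n₀.1)).symm
      ((-1 : ℂ) • n₀.2)⟩ : Σ w, B w).2‖ < ε := by
    rw [cast_eq]
    simp [hε]
  have husc := hB.usc_norm (⟨n₀.1, n₀.2 + cast (congrArg B (rfl : n₀.1 = n₀.1)).symm
      ((-1 : ℂ) • n₀.2)⟩ : Σ w, B w) ε hval
  have hev : ∀ᶠ p : {q : (Σ w, B w) × (Σ w, B w) // q.1.1 = q.2.1} in 𝓝 p₀,
      ‖((fun p : {q : (Σ w, B w) × (Σ w, B w) // q.1.1 = q.2.1} =>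
        (⟨p.1.1.1, p.1.1.2 + cast (congrArg B p.2).symm ((-1 : ℂ) • p.1.2.2)⟩ : Σ w, B w)) p).2‖
        < ε := (c3.continuousAt (x := p₀)).eventually husc
  rw [hp₀, nhds_subtype_eq_comap, eventually_comap] at hev
  obtain ⟨Wpr, hWpr, hWsub⟩ := hev.exists_mem
  rw [mem_nhds_prod_iff] at hWpr
  obtain ⟨N₁, hN₁, N₂, hN₂, hprod⟩ := hWpr
  refine ⟨interior (N₁ ∩ N₂), isOpen_interior,
    mem_interior_iff_mem_nhds.mpr (inter_mem hN₁ hN₂), fun w a b ha hb => ?_⟩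
  have ha' := interior_subset ha
  have hb' := interior_subset hb
  have h5 : ‖a + (-1 : ℂ) • b‖ < ε :=
    hWsub ((⟨w, a⟩, ⟨w, b⟩)) (hprod ⟨ha'.1, hb'.2⟩) (⟨(⟨w, a⟩, ⟨w, b⟩), rfl⟩ :
      {q : (Σ w, B w) × (Σ w, B w) // q.1.1 = q.2.1}) rfl
  rw [neg_one_smul, ← sub_eq_add_neg] at h5
  exact h5

/-- The zero section over a continuous map is continuous. -/
theorem aux_sec_zero (hB : IsUSCBanachBundle B) {Z : Type*} [TopologicalSpace Z]
    {ρ : Z → W} (hρ : Continuous ρ) :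
    Continuous fun z => (⟨ρ z, 0⟩ : Σ w, B w) := by
  rw [continuous_iff_continuousAt]
  intro z₀
  refine hB.zero_criterion _ (ρ z₀) ?_ ?_
  · rw [Filter.tendsto_map'_iff]
    have : ((fun m : Σ w, B w => ‖m.2‖) ∘ fun z => (⟨ρ z, 0⟩ : Σ w, B w))
        = fun _ => (0 : ℝ) := by
      funext z; simp [Function.comp]
    rw [this]
    exact tendsto_const_nhds
  · rw [Filter.tendsto_map'_iff]
    exact hρ.tendsto z₀

theorem aux_sec_add (hB : IsUSCBanachBundle B) {Z : Type*} [TopologicalSpace Z]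
    {ρ : Z → W} (f g : ∀ z, B (ρ z))
    (hf : Continuous fun z => (⟨ρ z, f z⟩ : Σ w, B w))
    (hg : Continuous fun z => (⟨ρ z, g z⟩ : Σ w, B w)) :
    Continuous fun z => (⟨ρ z, f z + g z⟩ : Σ w, B w) := by
  have c2 : Continuous fun z =>
      (⟨((⟨ρ z, f z⟩ : Σ w, B w), (⟨ρ z, g z⟩ : Σ w, B w)), rfl⟩ :
        {q : (Σ w, B w) × (Σ w, B w) // q.1.1 = q.2.1}) :=
    (hf.prodMk hg).subtype_mk _
  exact hB.cont_add.comp c2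

theorem aux_sec_smul (hB : IsUSCBanachBundle B) {Z : Type*} [TopologicalSpace Z]
    {ρ : Z → W} (c : ℂ) (f : ∀ z, B (ρ z))
    (hf : Continuous fun z => (⟨ρ z, f z⟩ : Σ w, B w)) :
    Continuous fun z => (⟨ρ z, c • f z⟩ : Σ w, B w) :=
  hB.cont_smul.comp (continuous_const.prodMk hf)

theorem aux_sec_sub (hB : IsUSCBanachBundle B) {Z : Type*} [TopologicalSpace Z]
    {ρ : Z → W} (f g : ∀ z, B (ρ z))
    (hf : Continuous fun z => (⟨ρ z, f z⟩ : Σ w, B w))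
    (hg : Continuous fun z => (⟨ρ z, g z⟩ : Σ w, B w)) :
    Continuous fun z => (⟨ρ z, f z - g z⟩ : Σ w, B w) := by
  have h2 := aux_sec_add hB f (fun z => (-1 : ℂ) • g z) hf (aux_sec_smul hB (-1 : ℂ) g hg)
  simpa only [neg_one_smul, ← sub_eq_add_neg] using h2

theorem aux_sec_sum (hB : IsUSCBanachBundle B) {Z : Type*} [TopologicalSpace Z]
    {ρ : Z → W} (hρ : Continuous ρ) {ι : Type*} (t : Finset ι) (f : ι → ∀ z, B (ρ z))
    (hf : ∀ i ∈ t, Continuous fun z => (⟨ρ z, f i z⟩ : Σ w, B w)) :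
    Continuous fun z => (⟨ρ z, ∑ i ∈ t, f i z⟩ : Σ w, B w) := by
  classical
  induction t using Finset.induction_on with
  | empty =>
    simp only [Finset.sum_empty]
    exact aux_sec_zero hB hρ
  | @insert a s ha ih =>
    simp only [Finset.sum_insert ha]
    exact aux_sec_add hB _ _ (hf a (Finset.mem_insert_self a s))
      (ih fun i hi => hf i (Finset.mem_insert_of_mem hi))

end AuxBundle

section LmapSec

variable (ω : X → Y) (Ω : (Σ x, E x) → (Σ y, F y))
  (hcover : ∀ m : Σ x, E x, (Ω m).1 = ω m.1)

/-- The fibrewise map induced by `Ω`. -/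
def Lmap (x : X) (v : E x) : F (ω x) :=
  cast (congrArg F (hcover ⟨x, v⟩)) (Ω ⟨x, v⟩).2

theorem Omega_eq (x : X) (v : E x) :
    Ω ⟨x, v⟩ = ⟨ω x, Lmap ω Ω hcover x v⟩ :=
  Sigma.ext (hcover _) (cast_heq _ _).symm

theorem norm_cast_congr {y y' : Y} (h : y = y') (w : F y) :
    ‖cast (congrArg F h) w‖ = ‖w‖ := by
  subst h; rfl

theorem norm_Lmap (x : X) (v : E x) :
    ‖Lmap ω Ω hcover x v‖ = ‖(Ω ⟨x, v⟩).2‖ :=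
  norm_cast_congr (hcover ⟨x, v⟩) _

variable (hlin : ∀ x : X,
  IsLinearMap ℂ (fun v : E x => cast (congrArg F (hcover ⟨x, v⟩)) (Ω ⟨x, v⟩).2))

include hlin

theorem Lmap_add (x : X) (u v : E x) :
    Lmap ω Ω hcover x (u + v) = Lmap ω Ω hcover x u + Lmap ω Ω hcover x v :=
  (hlin x).map_add u v

theorem Lmap_sub (x : X) (u v : E x) :
    Lmap ω Ω hcover x (u - v) = Lmap ω Ω hcover x u - Lmap ω Ω hcover x v :=
  (hlin x).map_sub u v

theorem Lmap_sum (x : X) {ι : Type*} (t : Finset ι) (c : ι → ℂ) (u : ι → E x) :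
    Lmap ω Ω hcover x (∑ i ∈ t, c i • u i) = ∑ i ∈ t, c i • Lmap ω Ω hcover x (u i) := by
  have h1 := map_sum (IsLinearMap.mk' _ (hlin x)) (fun i => c i • u i) t
  have h2 : ∀ i ∈ t, (IsLinearMap.mk' _ (hlin x)) (c i • u i)
      = c i • Lmap ω Ω hcover x (u i) := fun i _ => (hlin x).map_smul (c i) (u i)
  rw [Finset.sum_congr rfl h2] at h1
  exact h1

end LmapSec

/-- **Lemmas B.2 and B.3** (`lem:uscBb:cts`, `lem:uscBb:opem`). -/
theorem bundleMap_continuous_and_embedding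
    (hE : IsUSCBanachBundle E) (hF : IsUSCBanachBundle F)
    (ω : X → Y) (hω : Continuous ω)
    (Ω : (Σ x, E x) → (Σ y, F y))
    (hcover : ∀ m : Σ x, E x, (Ω m).1 = ω m.1)
    (hlin : ∀ x : X,
      IsLinearMap ℂ (fun v : E x => cast (congrArg F (hcover ⟨x, v⟩)) (Ω ⟨x, v⟩).2)) :
    -- (1) continuity from continuity against a spanning family of sections
    (∀ K : ℝ, 0 < K → (∀ m : Σ x, E x, ‖(Ω m).2‖ ≤ K * ‖m.2‖) →
      ∀ Γ : Set (∀ x, E x),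
        (∀ γ ∈ Γ, Continuous (fun x => (⟨x, γ x⟩ : Σ x, E x))) →
        (∀ x : X, Dense ((Submodule.span ℂ {v : E x | ∃ γ ∈ Γ, γ x = v} :
          Submodule ℂ (E x)) : Set (E x))) →
        (∀ γ ∈ Γ, Continuous (fun x => ((x, Ω ⟨x, γ x⟩) : X × Σ y, F y))) →
        Continuous Ω) ∧
    -- (2) if Ω is continuous and bounded below and ω is an embedding,
    -- then Ω⁻¹ : Ω(M) → M is continuous, i.e. Ω is an embedding
    (Continuous Ω →
      ∀ k : ℝ, 0 < k → (∀ m : Σ x, E x, k * ‖m.2‖ ≤ ‖(Ω m).2‖) →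
      Topology.IsEmbedding ω → Topology.IsEmbedding Ω) := by
  have hKb : ∀ (K : ℝ), (∀ m : Σ x, E x, ‖(Ω m).2‖ ≤ K * ‖m.2‖) →
      ∀ (x : X) (u : E x), ‖Lmap ω Ω hcover x u‖ ≤ K * ‖u‖ := by
    intro K hKbound x u
    rw [norm_Lmap]
    exact hKbound ⟨x, u⟩
  constructor
  · -- Part (1)
    intro K hK hKbound Γ hΓcont hdense hΓpull
    rw [continuous_iff_continuousAt]
    rintro ⟨x₀, v₀⟩
    rw [ContinuousAt, Filter.tendsto_def]
    intro U hU
    -- two applications of the key lemma in the bundle F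
    obtain ⟨V, hVo, hVmem, O, hOo, hOmem, ε, hε, hkey⟩ := aux_key hF (Ω ⟨x₀, v₀⟩) hU
    obtain ⟨V', hV'o, hV'mem, O', hO'o, hO'mem, ε', hε', hkey'⟩ :=
      aux_key hF (Ω ⟨x₀, v₀⟩) (hVo.mem_nhds hVmem)
    have hδ : 0 < min ε ε' / K := by positivity
    -- choose an approximating linear combination of sections
    obtain ⟨v, hvspan, hvdist⟩ := Metric.mem_closure_iff.mp (hdense x₀ v₀) _ hδ
    rw [SetLike.mem_coe, Submodule.mem_span_set'] at hvspan
    obtain ⟨n, c, g, hsum⟩ := hvspan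
    choose γf hγfΓ hγfx using fun i : Fin n => (g i).2
    set sfun : ∀ x, E x := fun x => ∑ i : Fin n, c i • γf i x with hsfun
    have hsx₀ : sfun x₀ = v := by
      rw [hsfun]
      simp only [hγfx]
      exact hsum
    have hdistv : ‖v₀ - sfun x₀‖ < min ε ε' / K := by
      rw [hsx₀, ← dist_eq_norm]
      exact hvdist
    -- continuity of the section x ↦ ⟨x, sfun x⟩
    have hσ : Continuous fun x => (⟨x, sfun x⟩ : Σ x, E x) := by
      rw [hsfun]
      exact aux_sec_sum hE (ρ := fun x : X => x) continuous_id Finset.univ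
        (fun i x => c i • γf i x)
        (fun i _ => aux_sec_smul hE (ρ := fun x : X => x) (c i) (γf i)
          (hΓcont (γf i) (hγfΓ i)))
    -- continuity of x ↦ Ω of the section, i.e. x ↦ ⟨ω x, Lmap x (sfun x)⟩
    have hτ0 : Continuous fun x =>
        (⟨ω x, ∑ i : Fin n, c i • Lmap ω Ω hcover x (γf i x)⟩ : Σ y, F y) := by
      refine aux_sec_sum hF (ρ := ω) hω Finset.univ
        (fun i x => c i • Lmap ω Ω hcover x (γf i x)) (fun i _ => ?_)
      refine aux_sec_smul hF (ρ := ω) (c i) (fun x => Lmap ω Ω hcover x (γf i x)) ?_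
      have h1 : Continuous fun x => Ω ⟨x, γf i x⟩ :=
        continuous_snd.comp (hΓpull (γf i) (hγfΓ i))
      have heq : (fun x => Ω ⟨x, γf i x⟩)
          = fun x => (⟨ω x, Lmap ω Ω hcover x (γf i x)⟩ : Σ y, F y) :=
        funext fun x => Omega_eq ω Ω hcover x (γf i x)
      rwa [heq] at h1
    have hτ : Continuous fun x =>
        (⟨ω x, Lmap ω Ω hcover x (sfun x)⟩ : Σ y, F y) := by
      have hLs : ∀ x, Lmap ω Ω hcover x (sfun x)
          = ∑ i : Fin n, c i • Lmap ω Ω hcover x (γf i x) := fun x =>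
        Lmap_sum ω Ω hcover hlin x Finset.univ c (fun i => γf i x)
      simp only [hLs]
      exact hτ0
    -- the value of the approximating section at x₀ lies in V
    have hτx₀V : (⟨ω x₀, Lmap ω Ω hcover x₀ (sfun x₀)⟩ : Σ y, F y) ∈ V := by
      have hval : Lmap ω Ω hcover x₀ (sfun x₀)
          = Lmap ω Ω hcover x₀ v₀ + Lmap ω Ω hcover x₀ (sfun x₀ - v₀) := by
        rw [← Lmap_add ω Ω hcover hlin]
        congr 1
        abel
      rw [hval]
      refine hkey' (ω x₀) _ _ ?_ ?_ ?_
      · have := hV'mem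
        rwa [Omega_eq ω Ω hcover x₀ v₀] at this
      · have := hO'mem
        rwa [hcover ⟨x₀, v₀⟩] at this
      · have h1 : ‖Lmap ω Ω hcover x₀ (sfun x₀ - v₀)‖ ≤ K * ‖sfun x₀ - v₀‖ :=
          hKb K hKbound x₀ _
      -- ‖sfun x₀ - v₀‖ = ‖v₀ - sfun x₀‖ < min ε ε' / K
        have h2 : ‖sfun x₀ - v₀‖ < min ε ε' / K := by
          rw [norm_sub_rev]
          exact hdistv
        have h3 : K * ‖sfun x₀ - v₀‖ < K * (min ε ε' / K) :=
          mul_lt_mul_of_pos_left h2 hK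
        rw [mul_div_cancel₀ _ (ne_of_gt hK)] at h3
        exact lt_of_le_of_lt h1 (lt_of_lt_of_le h3 (min_le_right _ _))
    -- eventualities in 𝓝 ⟨x₀, v₀⟩
    have hfstE : Tendsto (Sigma.fst : (Σ x, E x) → X) (𝓝 ⟨x₀, v₀⟩) (𝓝 x₀) :=
      hE.cont_proj.continuousAt
    have e1 : ∀ᶠ m : Σ x, E x in 𝓝 ⟨x₀, v₀⟩,
        (⟨ω m.1, Lmap ω Ω hcover m.1 (sfun m.1)⟩ : Σ y, F y) ∈ V := by
      have h1 : ∀ᶠ x in 𝓝 x₀,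
          (⟨ω x, Lmap ω Ω hcover x (sfun x)⟩ : Σ y, F y) ∈ V :=
        (hτ.continuousAt (x := x₀)).eventually (hVo.mem_nhds hτx₀V)
      exact hfstE.eventually h1
    have e2 : ∀ᶠ m : Σ x, E x in 𝓝 ⟨x₀, v₀⟩, ω m.1 ∈ O := by
      have hωx₀O : ω x₀ ∈ O := by
        have := hOmem
        rwa [hcover ⟨x₀, v₀⟩] at this
      have h1 : ∀ᶠ x in 𝓝 x₀, ω x ∈ O :=
        (hω.continuousAt (x := x₀)).eventually (hOo.mem_nhds hωx₀O)
      exact hfstE.eventually h1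
    have e3 : ∀ᶠ m : Σ x, E x in 𝓝 ⟨x₀, v₀⟩, ‖m.2 - sfun m.1‖ < min ε ε' / K := by
      have hD : Continuous fun m : Σ x, E x => (⟨m.1, m.2 - sfun m.1⟩ : Σ x, E x) := by
        refine aux_sec_sub hE (ρ := (Sigma.fst : (Σ x, E x) → X))
          (fun m => m.2) (fun m => sfun m.1) ?_ ?_
        · exact continuous_id
        · exact hσ.comp hE.cont_proj
      have husc := hE.usc_norm (⟨x₀, v₀ - sfun x₀⟩ : Σ x, E x) (min ε ε' / K) hdistv
      exact (hD.continuousAt (x := ⟨x₀, v₀⟩)).eventually husc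
    filter_upwards [e1, e2, e3] with m h1 h2 h3
    obtain ⟨x, w⟩ := m
    show Ω ⟨x, w⟩ ∈ U
    rw [Omega_eq ω Ω hcover x w]
    have hw : Lmap ω Ω hcover x w
        = Lmap ω Ω hcover x (sfun x) + Lmap ω Ω hcover x (w - sfun x) := by
      rw [← Lmap_add ω Ω hcover hlin]
      congr 1
      abel
    rw [hw]
    refine hkey (ω x) _ _ h1 h2 ?_
    have h4 : ‖Lmap ω Ω hcover x (w - sfun x)‖ ≤ K * ‖w - sfun x‖ := hKb K hKbound x _
    have h5 : K * ‖w - sfun x‖ < K * (min ε ε' / K) := mul_lt_mul_of_pos_left h3 hK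
    rw [mul_div_cancel₀ _ (ne_of_gt hK)] at h5
    exact lt_of_le_of_lt h4 (lt_of_lt_of_le h5 (min_le_left _ _))
  · -- Part (2)
    intro hΩcont k hk hlow hembω
    have hklow : ∀ (x : X) (u : E x), k * ‖u‖ ≤ ‖Lmap ω Ω hcover x u‖ := by
      intro x u
      rw [norm_Lmap]
      exact hlow ⟨x, u⟩
    have hinj : Function.Injective Ω := by
      rintro ⟨x, w⟩ ⟨x', w'⟩ hmm'
      have hx : x = x' := by
        refine hembω.injective ?_
        have h1 := congrArg Sigma.fst hmm'
        rwa [hcover ⟨x, w⟩, hcover ⟨x', w'⟩] at h1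
      subst hx
      have h2 : Lmap ω Ω hcover x w = Lmap ω Ω hcover x w' := by
        have h := hmm'
        rw [Omega_eq ω Ω hcover x w, Omega_eq ω Ω hcover x w'] at h
        exact sigma_mk_injective h
      have h4 : Lmap ω Ω hcover x (w - w') = 0 := by
        rw [Lmap_sub ω Ω hcover hlin, h2, sub_self]
      have h5 : k * ‖w - w'‖ ≤ 0 := by
        have := hklow x (w - w')
        rwa [h4, norm_zero] at this
      have h6 : w = w' := by
        have h7 : ‖w - w'‖ = 0 := by nlinarith [norm_nonneg (w - w')]
        rwa [norm_sub_eq_zero_iff] at h7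
      rw [h6]
    refine ⟨isInducing_iff_nhds.mpr ?_, hinj⟩
    intro m₀
    refine le_antisymm (tendsto_iff_comap.mp (hΩcont.continuousAt (x := m₀))) ?_
    obtain ⟨x₀, v₀⟩ := m₀
    rw [Filter.le_def]
    intro U hU
    obtain ⟨V₁, hV₁o, hV₁mem, O₁, hO₁o, hO₁mem, ε, hε, hkeyE⟩ := aux_key hE ⟨x₀, v₀⟩ hU
    obtain ⟨N, hNo, hNmem, hthin⟩ := aux_thin hF (Ω ⟨x₀, v₀⟩) (ε := k * ε) (by positivity)
    set V : Set (Σ x, E x) := V₁ ∩ Sigma.fst ⁻¹' O₁ ∩ Ω ⁻¹' N with hV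
    have hVo : IsOpen V := (hV₁o.inter (hO₁o.preimage hE.cont_proj)).inter
      (hNo.preimage hΩcont)
    have hVmem : (⟨x₀, v₀⟩ : Σ x, E x) ∈ V := ⟨⟨hV₁mem, hO₁mem⟩, hNmem⟩
    have hWo : IsOpen (Sigma.fst '' V) := hE.open_proj V hVo
    have hWmem : x₀ ∈ Sigma.fst '' V := ⟨_, hVmem, rfl⟩
    have hanchor : ∀ x ∈ Sigma.fst '' V, ∃ a : E x, (⟨x, a⟩ : Σ x, E x) ∈ V := by
      rintro x ⟨⟨x', a⟩, hmem, rfl⟩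
      exact ⟨a, hmem⟩
    have hGF : Tendsto Ω (comap Ω (𝓝 (Ω ⟨x₀, v₀⟩))) (𝓝 (Ω ⟨x₀, v₀⟩)) := tendsto_comap
    have hfst : Tendsto (Sigma.fst : (Σ x, E x) → X)
        (comap Ω (𝓝 (Ω ⟨x₀, v₀⟩))) (𝓝 x₀) := by
      have h1 : Tendsto (fun m : Σ x, E x => (Ω m).1)
          (comap Ω (𝓝 (Ω ⟨x₀, v₀⟩))) (𝓝 (ω x₀)) := by
        have h := (hF.cont_proj.tendsto (Ω ⟨x₀, v₀⟩)).comp hGF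
        rwa [hcover ⟨x₀, v₀⟩] at h
      have h2 : Tendsto (fun m : Σ x, E x => ω m.1)
          (comap Ω (𝓝 (Ω ⟨x₀, v₀⟩))) (𝓝 (ω x₀)) := by
        have heq : (fun m : Σ x, E x => (Ω m).1) = fun m : Σ x, E x => ω m.1 :=
          funext hcover
        rwa [heq] at h1
      rw [hembω.toIsInducing.nhds_eq_comap x₀, tendsto_comap_iff]
      exact h2
    have e1 : ∀ᶠ m : Σ x, E x in comap Ω (𝓝 (Ω ⟨x₀, v₀⟩)), m.1 ∈ Sigma.fst '' V :=
      hfst.eventually (hWo.mem_nhds hWmem : ∀ᶠ x in 𝓝 x₀, x ∈ Sigma.fst '' V)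
    have e2 : ∀ᶠ m : Σ x, E x in comap Ω (𝓝 (Ω ⟨x₀, v₀⟩)), Ω m ∈ N :=
      hGF.eventually (hNo.mem_nhds hNmem : ∀ᶠ n in 𝓝 (Ω ⟨x₀, v₀⟩), n ∈ N)
    filter_upwards [e1, e2] with m h1 h2
    obtain ⟨x, w⟩ := m
    obtain ⟨a, haV⟩ := hanchor x h1
    have haN : Ω ⟨x, a⟩ ∈ N := haV.2
    have haN' : (⟨ω x, Lmap ω Ω hcover x a⟩ : Σ y, F y) ∈ N := by
      rwa [Omega_eq ω Ω hcover x a] at haN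
    have hwN' : (⟨ω x, Lmap ω Ω hcover x w⟩ : Σ y, F y) ∈ N := by
      have := h2
      rwa [Omega_eq ω Ω hcover x w] at this
    have hthin' : ‖Lmap ω Ω hcover x a - Lmap ω Ω hcover x w‖ < k * ε :=
      hthin (ω x) _ _ haN' hwN'
    have hsub : ‖Lmap ω Ω hcover x (a - w)‖ < k * ε := by
      rw [Lmap_sub ω Ω hcover hlin]
      exact hthin'
    have hlow' : k * ‖a - w‖ ≤ ‖Lmap ω Ω hcover x (a - w)‖ := hklow x (a - w)
    have hdist : ‖w - a‖ < ε := by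
      have h3 : k * ‖a - w‖ < k * ε := lt_of_le_of_lt hlow' hsub
      have h4 : ‖a - w‖ < ε := (mul_lt_mul_iff_right₀ hk).mp h3
      rwa [norm_sub_rev] at h4
    have h5 := hkeyE x a (w - a) haV.1.1 haV.1.2 hdist
    have h6 : a + (w - a) = w := by abel
    rwa [h6] at h5
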